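/- arXiv:2207.03685 — 5 statements merged into one kernel-verified Lean document; each statement's English description precedes it below -/
import Mathlib

section
/- Let r = 3 and let p' ≥ 3 be an odd integer. For every integer n ≥ 0, the following identity holds in A = AddMonoidAlgebra ℤ ℚ: Σ_{λ ∈ Π_{3,n}} Σ_{w ∈ S_3} sign(w)·q^{(p'/4)‖2λ + w•δ‖² + ⟨2λ + w•δ, δ⟩} = (−1)^{n+1} · q^{p'/2 + (p'/2)(n²/3 + n) − n − 2} · Σ_{i=0}^{n} (−1)^i · q^{(p'/2)(i² + i) − i} · (1 − q^{n−i+1})(1 − q^{2i+1})(1 − q^{n+i+2}). -/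
/-!
The orbit of `δ` under `S₃` is the set of the six roots `±α₁, ±α₂, ±θ` of `A₂`, and `w ↦ s_β w`
exchanges `β` and `-β` while flipping the sign. Since `2λ - β = 2(λ - β) + β`, the alternating sum
over `S₃` at `λ` becomes `Σ_{β > 0} ±(G_β(λ) - G_β(λ - β))` with `G_β(λ) = q^{f(2λ + β)}`.
Writing `λ = nΛ₁ - aα₁ - bα₂`, the shifts `λ - β` move `(a, b)` inside the triangle
`n ≥ a ≥ b ≥ 0`, so the sum over `Π_{3,n}` telescopes to the boundary. The boundary terms at `a`
are `K(2a-n-1) - K(2a-n)` for `K(x) = q^{g(x)} (1 - q^{n+1-x} + q^{2n+3})`, while the `i`-th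
summand on the right is `±(K(i) - K(-i-1))`, because `(1 - q^A)(1 - q^B)(1 - q^{A+B})` has only six
monomials. Both sides are therefore `Σ_{m=0}^{2n+1} (-1)^m K(m-n-1)`.
-/

open Finset

noncomputable section

/-- Inner product `⟨u,v⟩ = Σ_i u i * v i` on `ℚ^r`. -/
def ip {r : ℕ} (u v : Fin r → ℚ) : ℚ := ∑ i, u i * v i

/-- Action of `S_r` permuting coordinates: `(w • v) i = v (w⁻¹ i)`. -/
def pact {r : ℕ} (w : Equiv.Perm (Fin r)) (v : Fin r → ℚ) : Fin r → ℚ := fun i => v (w⁻¹ i)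

/-- The Weyl vector `δ`, whose (1-indexed) `i`-th coordinate is `(r+1-2i)/2`. -/
def weylδ (r : ℕ) : Fin r → ℚ := fun j => ((r : ℚ) - 1 - 2 * ((j : ℕ) : ℚ)) / 2

/-- Membership in `V = {v : Fin r → ℚ | Σ_i v i = 0}`. -/
def memV {r : ℕ} (v : Fin r → ℚ) : Prop := ∑ i, v i = 0

/-- Membership in the root lattice `Q_r`. -/
def memQ {r : ℕ} (v : Fin r → ℚ) : Prop := memV v ∧ ∀ i, ∃ m : ℤ, v i = (m : ℚ)

/-- Membership in the weight lattice `P_r`. -/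
def memP {r : ℕ} (v : Fin r → ℚ) : Prop := memV v ∧ ∀ i j, ∃ m : ℤ, v i - v j = (m : ℚ)

/-- The first fundamental weight `Λ₁ = ε₁ - (1/r)(ε₁ + ⋯ + ε_r)`. -/
def Lam1 (r : ℕ) : Fin r → ℚ := fun j => (if (j : ℕ) = 0 then 1 else 0) - 1 / (r : ℚ)

/-- The simple roots, 0-indexed: `srootF i = ε_{i+1} - ε_{i+2}` in 1-indexed notation. -/
def srootF {r : ℕ} (i : Fin (r - 1)) : Fin r → ℚ :=
  fun j => (if (j : ℕ) = (i : ℕ) then 1 else 0) - (if (j : ℕ) = (i : ℕ) + 1 then 1 else 0)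

/-- The highest root `θ = ε₁ - ε_r`. -/
def hroot (r : ℕ) : Fin r → ℚ :=
  fun j => (if (j : ℕ) = 0 then 1 else 0) - (if (j : ℕ) = r - 1 then 1 else 0)

/-- The set `Π_{r,n}` of weights of `L_r(nΛ₁)`:
all `nΛ₁ - a₁α₁ - ⋯ - a_{r-1}α_{r-1}` with `n ≥ a₁ ≥ ⋯ ≥ a_{r-1} ≥ 0`. -/
def PiWts (r n : ℕ) : Set (Fin r → ℚ) :=
  {v | ∃ a : Fin (r - 1) → ℤ, (∀ i, 0 ≤ a i) ∧ (∀ i, a i ≤ (n : ℤ)) ∧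
        (∀ i j, i ≤ j → a j ≤ a i) ∧
        v = (n : ℚ) • Lam1 r - ∑ i, (a i : ℚ) • srootF i}

/-- `Π_{r,n}` as a `Finset`: the (finitely many, multiplicity-one) weights of `L_r(nΛ₁)`. -/
def PiFin (r n : ℕ) : Finset (Fin r → ℚ) :=
  ((Finset.univ : Finset (Fin (r - 1) → Fin (n + 1))).filter
      (fun a => ∀ i j : Fin (r - 1), i ≤ j → ((a j : ℕ) : ℤ) ≤ ((a i : ℕ) : ℤ))).image
    (fun a => (n : ℚ) • Lam1 r - ∑ i, ((a i : ℕ) : ℚ) • srootF i)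

open Equiv

namespace A2WeylSum

def qPow (e : ℚ) : AddMonoidAlgebra ℤ ℚ := AddMonoidAlgebra.single e 1

lemma single_eq_zsmul_qPow (e : ℚ) (k : ℤ) : AddMonoidAlgebra.single e k = k • qPow e := by
  rw [qPow, AddMonoidAlgebra.smul_single', mul_one]

lemma qPow_add (a b : ℚ) : qPow (a + b) = qPow a * qPow b := by
  simp only [qPow, AddMonoidAlgebra.single_mul_single, mul_one]

lemma hroot_three : hroot 3 = ![1, 0, -1] := by
  funext j; fin_cases j <;> simp [hroot]

lemma srootF_zero : (srootF 0 : Fin 3 → ℚ) = ![1, -1, 0] := by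
  funext j; fin_cases j <;> simp [srootF]

lemma srootF_one : (srootF 1 : Fin 3 → ℚ) = ![0, 1, -1] := by
  funext j; fin_cases j <;> simp [srootF]

lemma hroot_eq_srootF_add : hroot 3 = srootF 0 + srootF 1 := by
  rw [hroot_three, srootF_zero, srootF_one]
  funext j; fin_cases j <;> simp

lemma weylδ_three : weylδ 3 = ![1, 0, -1] := by
  funext j; fin_cases j <;> norm_num [weylδ]

lemma perm_fin_three_univ : (Finset.univ : Finset (Perm (Fin 3))) =
    {1, swap 0 1, swap 0 2, swap 1 2, swap 0 1 * swap 1 2, swap 0 2 * swap 1 2} := by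
  decide

theorem sum_sign_smul_pact_weylδ_three {M : Type*} [AddCommGroup M] (F : (Fin 3 → ℚ) → M) :
    ∑ w : Perm (Fin 3), (Perm.sign w : ℤ) • F (pact w (weylδ 3)) =
      (F (hroot 3) - F (-hroot 3)) - (F (srootF 0) - F (-srootF 0))
        - (F (srootF 1) - F (-srootF 1)) := by
  have pact_eq : ∀ w : Perm (Fin 3),
      pact w (weylδ 3) = ![weylδ 3 (w⁻¹ 0), weylδ 3 (w⁻¹ 1), weylδ 3 (w⁻¹ 2)] := by
    intro w; funext j; fin_cases j <;> rfl
  simp only [pact_eq, perm_fin_three_univ]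
  rw [Finset.sum_insert (by decide), Finset.sum_insert (by decide), Finset.sum_insert (by decide),
    Finset.sum_insert (by decide), Finset.sum_insert (by decide), Finset.sum_singleton]
  simp [hroot_three, srootF_zero, srootF_one, weylδ_three, Matrix.neg_cons, swap_apply_def,
    mul_inv_rev]
  abel

def qDegree (P : ℚ) {r : ℕ} (μ : Fin r → ℚ) : ℚ := P / 4 * ip μ μ + ip μ (weylδ r)

def rootTerm (P : ℚ) (β v : Fin 3 → ℚ) : AddMonoidAlgebra ℤ ℚ := qPow (qDegree P ((2 : ℚ) • v + β))

theorem sum_sign_single_qDegree (P : ℚ) (v : Fin 3 → ℚ) :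
    ∑ w : Perm (Fin 3),
        AddMonoidAlgebra.single (qDegree P ((2 : ℚ) • v + pact w (weylδ 3))) (Perm.sign w : ℤ) =
      (rootTerm P (hroot 3) v - rootTerm P (hroot 3) (v - hroot 3))
        - (rootTerm P (srootF 0) v - rootTerm P (srootF 0) (v - srootF 0))
        - (rootTerm P (srootF 1) v - rootTerm P (srootF 1) (v - srootF 1)) := by
  have reflect : ∀ β : Fin 3 → ℚ, (2 : ℚ) • v + -β = (2 : ℚ) • (v - β) + β := fun β => by module
  simp only [single_eq_zsmul_qPow]
  rw [sum_sign_smul_pact_weylδ_three (fun μ => qPow (qDegree P ((2 : ℚ) • v + μ)))]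
  simp only [reflect, rootTerm]

def piWeight (n a b : ℕ) : Fin 3 → ℚ := (n : ℚ) • Lam1 3 - (a : ℚ) • srootF 0 - (b : ℚ) • srootF 1

lemma piWeight_eq (n a b : ℕ) :
    piWeight n a b = ![2 * (n : ℚ) / 3 - a, a - b - n / 3, b - n / 3] := by
  funext j; fin_cases j <;> simp [piWeight, Lam1, srootF] <;> ring

lemma piWeight_sub_hroot (n a b : ℕ) : piWeight n a b - hroot 3 = piWeight n (a + 1) (b + 1) := by
  rw [hroot_eq_srootF_add]
  simp only [piWeight]; push_cast; module

lemma piWeight_sub_srootF_zero (n a b : ℕ) : piWeight n a b - srootF 0 = piWeight n (a + 1) b := by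
  simp only [piWeight]; push_cast; module

lemma piWeight_sub_srootF_one (n a b : ℕ) : piWeight n a b - srootF 1 = piWeight n a (b + 1) := by
  simp only [piWeight]; push_cast; module

lemma piWeight_injective2 (n : ℕ) : Function.Injective2 (piWeight n) := by
  intro a a' b b' h
  have h0 := congrFun h 0
  have h2 := congrFun h 2
  simp [piWeight_eq] at h0 h2
  exact ⟨h0, h2⟩

lemma PiFin_three_eq_image (n : ℕ) :
    PiFin 3 n = ((range (n + 1)).sigma fun a => range (a + 1)).image
      (fun p => piWeight n p.1 p.2) := by
  ext v
  simp only [PiFin, Finset.mem_image, Finset.mem_filter, Finset.mem_univ, true_and,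
    Finset.mem_sigma, Finset.mem_range, Sigma.exists]
  constructor
  · rintro ⟨x, hx, rfl⟩
    have h01 : ((x 1 : ℕ) : ℤ) ≤ (x 0 : ℕ) := hx 0 1 (by decide)
    refine ⟨x 0, x 1, ⟨(x 0).isLt, by omega⟩, ?_⟩
    simp [piWeight, Fin.sum_univ_two, sub_sub]
  · rintro ⟨a, b, ⟨ha, hb⟩, rfl⟩
    refine ⟨![⟨a, ha⟩, ⟨b, by omega⟩], ?_, ?_⟩
    · intro i j hij
      fin_cases i <;> fin_cases j <;> simp_all [Nat.le_of_lt_succ hb]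
    · simp [piWeight, Fin.sum_univ_two, sub_sub]

theorem sum_PiFin_three {M : Type*} [AddCommMonoid M] (n : ℕ) (F : (Fin 3 → ℚ) → M) :
    ∑ v ∈ PiFin 3 n, F v = ∑ a ∈ range (n + 1), ∑ b ∈ range (a + 1), F (piWeight n a b) := by
  rw [PiFin_three_eq_image, Finset.sum_image, Finset.sum_sigma]
  rintro ⟨a, b⟩ - ⟨a', b'⟩ - h
  obtain ⟨rfl, rfl⟩ := piWeight_injective2 n h
  rfl

section Telescope

variable {M : Type*} [AddCommGroup M]

theorem sum_triangle_sub_diag (f : ℕ → ℕ → M) (N : ℕ) :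
    ∑ a ∈ range N, ∑ b ∈ range (a + 1), (f a b - f (a + 1) (b + 1)) =
      ∑ a ∈ range N, (f a 0 - f N (a + 1)) := by
  induction N with
  | zero => simp
  | succ N ih =>
    rw [sum_range_succ, ih, sum_range_succ (fun a => f a 0 - f (N + 1) (a + 1))]
    simp only [sum_sub_distrib]
    rw [sum_range_succ' (f N), sum_range_succ fun b => f (N + 1) (b + 1)]
    abel

theorem sum_triangle_sub_fst (f : ℕ → ℕ → M) (N : ℕ) :
    ∑ a ∈ range N, ∑ b ∈ range (a + 1), (f a b - f (a + 1) b) =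
      ∑ a ∈ range N, (f a a - f N a) := by
  induction N with
  | zero => simp
  | succ N ih =>
    rw [sum_range_succ, ih, sum_range_succ (fun a => f a a - f (N + 1) a), sum_sub_distrib,
      sum_sub_distrib, sum_sub_distrib, sum_range_succ (f N), sum_range_succ (f (N + 1))]
    abel

theorem sum_triangle_sub_snd (f : ℕ → ℕ → M) (N : ℕ) :
    ∑ a ∈ range N, ∑ b ∈ range (a + 1), (f a b - f a (b + 1)) =
      ∑ a ∈ range N, (f a 0 - f a (a + 1)) :=
  sum_congr rfl fun a _ => sum_range_sub' (f a) (a + 1)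

theorem sum_triangle_sub_sub (f g h : ℕ → ℕ → M) (N : ℕ) :
    ∑ a ∈ range N, ∑ b ∈ range (a + 1),
        ((f a b - f (a + 1) (b + 1)) - (g a b - g (a + 1) b) - (h a b - h a (b + 1))) =
      ∑ a ∈ range N, ((f a 0 - f N (a + 1)) - (g a a - g N a) - (h a 0 - h a (a + 1))) := by
  rw [sum_sub_distrib, sum_sub_distrib, ← sum_triangle_sub_diag, ← sum_triangle_sub_fst,
    ← sum_triangle_sub_snd]
  simp only [sum_sub_distrib]

theorem sum_range_two_mul (g : ℕ → M) (N : ℕ) :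
    ∑ m ∈ range (2 * N), g m = ∑ a ∈ range N, (g (2 * a) + g (2 * a + 1)) := by
  induction N with
  | zero => simp
  | succ N ih =>
    rw [mul_add_one, sum_range_succ, sum_range_succ, ih, sum_range_succ]
    abel

theorem sum_range_two_mul_add_two (g : ℕ → M) (n : ℕ) :
    ∑ m ∈ range (2 * (n + 1)), g m = ∑ i ∈ range (n + 1), (g (n + 1 + i) + g (n - i)) := by
  rw [two_mul, sum_range_add, sum_add_distrib, add_comm]
  congr 1
  simpa using (sum_range_reflect g (n + 1)).symm

end Telescope

lemma qDegree_three (P x y z : ℚ) :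
    qDegree P ![x, y, z] = P / 4 * (x ^ 2 + y ^ 2 + z ^ 2) + (x - z) := by
  simp [qDegree, ip, Fin.sum_univ_three, weylδ_three]
  ring

lemma two_smul_add_three (x y z u v w : ℚ) :
    (2 : ℚ) • ![x, y, z] + ![u, v, w] = ![2 * x + u, 2 * y + v, 2 * z + w] := by
  funext j; fin_cases j <;> simp

def edgeExp (P n x : ℚ) : ℚ := P / 2 * (1 + n ^ 2 / 3 + n + x ^ 2 + x) - n - 2 - x

def edgeTerm (P n x : ℚ) : AddMonoidAlgebra ℤ ℚ :=
  qPow (edgeExp P n x) * (1 - qPow (n + 1 - x) + qPow (2 * n + 3))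

lemma boundary_eq_edgeTerm_sub (P : ℚ) (n a : ℕ) :
    (rootTerm P (hroot 3) (piWeight n a 0) - rootTerm P (hroot 3) (piWeight n (n + 1) (a + 1)))
      - (rootTerm P (srootF 0) (piWeight n a a) - rootTerm P (srootF 0) (piWeight n (n + 1) a))
      - (rootTerm P (srootF 1) (piWeight n a 0) - rootTerm P (srootF 1) (piWeight n a (a + 1))) =
      edgeTerm P n (2 * a - n - 1) - edgeTerm P n (2 * a - n) := by
  simp only [rootTerm, piWeight_eq, hroot_three, srootF_zero, srootF_one, two_smul_add_three,
    qDegree_three, edgeTerm, mul_add, mul_sub, mul_one, ← qPow_add, edgeExp]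
  push_cast
  ring_nf

lemma qPow_mul_one_sub_mul_eq_edgeTerm_sub (P N I : ℚ) :
    qPow (P / 2 + P / 2 * (N ^ 2 / 3 + N) - N - 2) *
        (qPow (P / 2 * (I ^ 2 + I) - I) * (1 - qPow (N - I + 1)) * (1 - qPow (2 * I + 1)) *
          (1 - qPow (N + I + 2))) =
      edgeTerm P N I - edgeTerm P N (-(I + 1)) := by
  simp only [edgeTerm, edgeExp, mul_add, mul_sub, sub_mul, mul_one, ← qPow_add]
  ring_nf

theorem sum_PiFin_three_sum_sign_eq_sum_edgeTerm (P : ℚ) (n : ℕ) :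
    ∑ v ∈ PiFin 3 n, ∑ w : Perm (Fin 3),
        AddMonoidAlgebra.single (qDegree P ((2 : ℚ) • v + pact w (weylδ 3))) (Perm.sign w : ℤ) =
      ∑ m ∈ range (2 * (n + 1)), (-1 : ℤ) ^ m • edgeTerm P n (m - n - 1) := by
  rw [sum_PiFin_three]
  simp only [sum_sign_single_qDegree, piWeight_sub_hroot, piWeight_sub_srootF_zero,
    piWeight_sub_srootF_one]
  refine (sum_triangle_sub_sub (fun a b => rootTerm P (hroot 3) (piWeight n a b))
    (fun a b => rootTerm P (srootF 0) (piWeight n a b))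
    (fun a b => rootTerm P (srootF 1) (piWeight n a b)) (n + 1)).trans ?_
  rw [sum_range_two_mul]
  refine sum_congr rfl fun a _ => ?_
  rw [boundary_eq_edgeTerm_sub, (even_two_mul a).neg_one_pow, (odd_two_mul_add_one a).neg_one_pow,
    one_smul, neg_one_zsmul, ← sub_eq_add_neg]
  congr 2 <;> push_cast <;> ring

theorem smul_qPow_mul_sum_eq_sum_edgeTerm (P : ℚ) (n : ℕ) :
    ((-1 : ℤ) ^ (n + 1)) • (qPow (P / 2 + P / 2 * ((n : ℚ) ^ 2 / 3 + n) - n - 2) *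
        ∑ i ∈ range (n + 1), ((-1 : ℤ) ^ i) •
          (qPow (P / 2 * ((i : ℚ) ^ 2 + i) - i) * (1 - qPow ((n : ℚ) - i + 1)) *
            (1 - qPow (2 * (i : ℚ) + 1)) * (1 - qPow ((n : ℚ) + i + 2)))) =
      ∑ m ∈ range (2 * (n + 1)), (-1 : ℤ) ^ m • edgeTerm P n (m - n - 1) := by
  rw [sum_range_two_mul_add_two, mul_sum, smul_sum]
  refine sum_congr rfl fun i hi => ?_
  have hin : i ≤ n := Nat.lt_succ_iff.mp (mem_range.mp hi)
  have sign_high : (-1 : ℤ) ^ (n + 1 + i) = (-1) ^ (n + 1) * (-1) ^ i := pow_add _ _ _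
  have sign_low : (-1 : ℤ) ^ (n - i) = -((-1) ^ (n + 1) * (-1) ^ i) := by
    rw [← sign_high, show n + 1 + i = (n - i) + 2 * i + 1 by omega, pow_add, pow_add, pow_mul]
    simp
  have arg_high : ((n + 1 + i : ℕ) : ℚ) - n - 1 = i := by push_cast; ring
  have arg_low : ((n - i : ℕ) : ℚ) - n - 1 = -(i + 1) := by rw [Nat.cast_sub hin]; ring
  rw [mul_smul_comm, smul_smul, qPow_mul_one_sub_mul_eq_edgeTerm_sub, sign_high, sign_low,
    arg_high, arg_low, neg_smul, smul_sub, sub_eq_add_neg]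

end A2WeylSum

open A2WeylSum in
theorem stmt0_general (p' : ℕ) (n : ℕ) :
    ∑ lam ∈ PiFin 3 n, ∑ w : Equiv.Perm (Fin 3),
      (AddMonoidAlgebra.single
        (((p' : ℚ) / 4) * ip ((2 : ℚ) • lam + pact w (weylδ 3))
            ((2 : ℚ) • lam + pact w (weylδ 3))
          + ip ((2 : ℚ) • lam + pact w (weylδ 3)) (weylδ 3))
        ((Equiv.Perm.sign w : ℤ)) : AddMonoidAlgebra ℤ ℚ)
    = ((-1 : ℤ) ^ (n + 1)) •
        ((AddMonoidAlgebra.single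
            ((p' : ℚ) / 2 + (p' : ℚ) / 2 * ((n : ℚ) ^ 2 / 3 + (n : ℚ)) - (n : ℚ) - 2)
            (1 : ℤ) : AddMonoidAlgebra ℤ ℚ) *
          ∑ i ∈ Finset.range (n + 1), ((-1 : ℤ) ^ i) •
            ((AddMonoidAlgebra.single
                ((p' : ℚ) / 2 * ((i : ℚ) ^ 2 + (i : ℚ)) - (i : ℚ))
                (1 : ℤ) : AddMonoidAlgebra ℤ ℚ) *
              (1 - (AddMonoidAlgebra.single ((n : ℚ) - (i : ℚ) + 1) (1 : ℤ) :
                      AddMonoidAlgebra ℤ ℚ)) *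
              (1 - (AddMonoidAlgebra.single (2 * (i : ℚ) + 1) (1 : ℤ) :
                      AddMonoidAlgebra ℤ ℚ)) *
              (1 - (AddMonoidAlgebra.single ((n : ℚ) + (i : ℚ) + 2) (1 : ℤ) :
                      AddMonoidAlgebra ℤ ℚ)))) :=
  (sum_PiFin_three_sum_sign_eq_sum_edgeTerm p' n).trans
    (smul_qPow_mul_sum_eq_sum_edgeTerm p' n).symm

/-- for `r = 3` and odd `p' ≥ 3`, the identity in `AddMonoidAlgebra ℤ ℚ`:
`Σ_{λ ∈ Π_{3,n}} Σ_{w ∈ S_3} sign(w) q^{(p'/4)‖2λ+w•δ‖² + ⟨2λ+w•δ, δ⟩}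
 = (-1)^{n+1} q^{p'/2 + (p'/2)(n²/3+n) - n - 2}
   Σ_{i=0}^{n} (-1)^i q^{(p'/2)(i²+i)-i} (1-q^{n-i+1})(1-q^{2i+1})(1-q^{n+i+2})`. -/
theorem stmt0 (p' : ℕ) (hp' : 3 ≤ p') (hodd : Odd p') (n : ℕ) :
    ∑ lam ∈ PiFin 3 n, ∑ w : Equiv.Perm (Fin 3),
      (AddMonoidAlgebra.single
        (((p' : ℚ) / 4) * ip ((2 : ℚ) • lam + pact w (weylδ 3))
            ((2 : ℚ) • lam + pact w (weylδ 3))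
          + ip ((2 : ℚ) • lam + pact w (weylδ 3)) (weylδ 3))
        ((Equiv.Perm.sign w : ℤ)) : AddMonoidAlgebra ℤ ℚ)
    = ((-1 : ℤ) ^ (n + 1)) •
        ((AddMonoidAlgebra.single
            ((p' : ℚ) / 2 + (p' : ℚ) / 2 * ((n : ℚ) ^ 2 / 3 + (n : ℚ)) - (n : ℚ) - 2)
            (1 : ℤ) : AddMonoidAlgebra ℤ ℚ) *
          ∑ i ∈ Finset.range (n + 1), ((-1 : ℤ) ^ i) •
            ((AddMonoidAlgebra.single
                ((p' : ℚ) / 2 * ((i : ℚ) ^ 2 + (i : ℚ)) - (i : ℚ))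
                (1 : ℤ) : AddMonoidAlgebra ℤ ℚ) *
              (1 - (AddMonoidAlgebra.single ((n : ℚ) - (i : ℚ) + 1) (1 : ℤ) :
                      AddMonoidAlgebra ℤ ℚ)) *
              (1 - (AddMonoidAlgebra.single (2 * (i : ℚ) + 1) (1 : ℤ) :
                      AddMonoidAlgebra ℤ ℚ)) *
              (1 - (AddMonoidAlgebra.single ((n : ℚ) + (i : ℚ) + 2) (1 : ℤ) :
                      AddMonoidAlgebra ℤ ℚ)))) :=
  stmt0_general p' n
end
end

section
/- Let r ≥ 2 and let p, p' be integers with 1 ≤ p ≤ r − 1, p < p', and gcd(p,p') = 1. Let μ ∈ P_r and define E(α,w) = (pp'/2)‖α‖² − p'⟨α,δ⟩ + p⟨α, w•δ⟩ − ⟨δ, w•δ − δ⟩ for α ∈ V and w ∈ S_r. Then for every x ∈ ℚ there is a bijection between the sets {(α,w) : α ∈ μ + Q_r, w ∈ S_r, E(α,w) = x, sign(w) = 1} and {(α,w) : α ∈ μ + Q_r, w ∈ S_r, E(α,w) = x, sign(w) = −1}. (In other words, the coefficient of q^x in the shifted character χ̄^{r,p,p';μ}_{0,0} vanishes for every x,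 i.e. χ̄^{r,p,p';μ}_{0,0} = 0.) -/
open Finset

noncomputable section

/-- The exponent `E(α,w) = (pp'/2)‖α‖² - p'⟨α,δ⟩ + p⟨α,w•δ⟩ - ⟨δ, w•δ - δ⟩`. -/
def Eexp (r p p' : ℕ) (α : Fin r → ℚ) (w : Equiv.Perm (Fin r)) : ℚ :=
  ((p : ℚ) * p' / 2) * ip α α - p' * ip α (weylδ r) + p * ip α (pact w (weylδ r))
    - ip (weylδ r) (pact w (weylδ r) - weylδ r)

lemma ip_comm {r : ℕ} (u v : Fin r → ℚ) : ip u v = ip v u := by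
  simp [ip, mul_comm]
lemma ip_sub_left {r : ℕ} (u v w : Fin r → ℚ) : ip (u - v) w = ip u w - ip v w := by
  simp [ip, sub_mul, Finset.sum_sub_distrib]
lemma ip_sub_right {r : ℕ} (u v w : Fin r → ℚ) : ip u (v - w) = ip u v - ip u w := by
  simp [ip, mul_sub, Finset.sum_sub_distrib]
lemma ip_add_right {r : ℕ} (u v w : Fin r → ℚ) : ip u (v + w) = ip u v + ip u w := by
  simp [ip, mul_add, Finset.sum_add_distrib]
lemma ip_add_left {r : ℕ} (u v w : Fin r → ℚ) : ip (u + v) w = ip u w + ip v w := by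
  simp [ip, add_mul, Finset.sum_add_distrib]
lemma ip_neg_right {r : ℕ} (u v : Fin r → ℚ) : ip u (-v) = - ip u v := by
  simp [ip]
lemma ip_neg_left {r : ℕ} (u v : Fin r → ℚ) : ip (-u) v = - ip u v := by
  simp [ip]
lemma ip_smul_right {r : ℕ} (a : ℚ) (u v : Fin r → ℚ) : ip u (a • v) = a * ip u v := by
  simp only [ip, Pi.smul_apply, smul_eq_mul, Finset.mul_sum]; exact Finset.sum_congr rfl (fun i _ => by ring)
lemma ip_smul_left {r : ℕ} (a : ℚ) (u v : Fin r → ℚ) : ip (a • u) v = a * ip u v := by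
  simp only [ip, Pi.smul_apply, smul_eq_mul, Finset.mul_sum]; exact Finset.sum_congr rfl (fun i _ => by ring)
lemma pact_one {r : ℕ} (v : Fin r → ℚ) : pact 1 v = v := by
  funext i; simp [pact]
lemma pact_mul {r : ℕ} (w₁ w₂ : Equiv.Perm (Fin r)) (v : Fin r → ℚ) :
    pact (w₁ * w₂) v = pact w₁ (pact w₂ v) := by
  funext i; simp [pact, mul_inv_rev]
lemma pact_sub {r : ℕ} (w : Equiv.Perm (Fin r)) (u v : Fin r → ℚ) :
    pact w (u - v) = pact w u - pact w v := by
  funext i; simp [pact]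
lemma ip_pact_pact {r : ℕ} (w : Equiv.Perm (Fin r)) (u v : Fin r → ℚ) :
    ip (pact w u) (pact w v) = ip u v := by
  simpa [ip, pact] using Equiv.sum_comp (w⁻¹ : Equiv.Perm (Fin r)) (fun j => u j * v j)
lemma ip_pact_left {r : ℕ} (w : Equiv.Perm (Fin r)) (u v : Fin r → ℚ) :
    ip (pact w u) v = ip u (pact w⁻¹ v) := by
  have := ip_pact_pact w⁻¹ (pact w u) v
  rw [← pact_mul, inv_mul_cancel, pact_one] at this
  exact this.symm
lemma sum_pact {r : ℕ} (w : Equiv.Perm (Fin r)) (v : Fin r → ℚ) :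
    ∑ i, pact w v i = ∑ i, v i := by
  simpa [pact] using Equiv.sum_comp (w⁻¹ : Equiv.Perm (Fin r)) v


/-- for `1 ≤ p ≤ r-1 < r`, `p < p'` coprime, and `μ ∈ P_r`, for every `x ∈ ℚ`
the positive-sign and negative-sign parts of `{(α,w) : α ∈ μ + Q_r, w ∈ S_r, E(α,w) = x}`
are in bijection (i.e. the coefficient of `q^x` in `χ̄^{r,p,p';μ}_{0,0}` vanishes). -/
theorem stmt1 (r p p' : ℕ) (hr : 2 ≤ r) (hp1 : 1 ≤ p) (hpr : p ≤ r - 1) (hpp' : p < p')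
    (hcop : Nat.Coprime p p') (μ : Fin r → ℚ) (hμ : memP μ) (x : ℚ) :
    Nonempty
      ({aw : (Fin r → ℚ) × Equiv.Perm (Fin r) //
          (∃ β, memQ β ∧ aw.1 = μ + β) ∧ Eexp r p p' aw.1 aw.2 = x ∧
            Equiv.Perm.sign aw.2 = 1} ≃
        {aw : (Fin r → ℚ) × Equiv.Perm (Fin r) //
          (∃ β, memQ β ∧ aw.1 = μ + β) ∧ Eexp r p p' aw.1 aw.2 = x ∧
            Equiv.Perm.sign aw.2 = -1}) := by
  have hpr' : p < r := by omega
  have h0r : 0 < r := by omega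
  set i0 : Fin r := ⟨0, h0r⟩ with hi0
  set i1 : Fin r := ⟨p, hpr'⟩ with hi1
  have hne : i0 ≠ i1 := Fin.ne_of_val_ne (show (0:ℕ) ≠ p by omega)
  set t : Equiv.Perm (Fin r) := Equiv.swap i0 i1 with ht
  have htinv : t⁻¹ = t := Equiv.swap_inv i0 i1
  have hss : t * t = 1 := Equiv.swap_mul_self i0 i1
  set c : Fin r → ℚ := fun j => (if j = i1 then 1 else 0) - (if j = i0 then 1 else 0) with hc
  have hti0 : t i0 = i1 := Equiv.swap_apply_left i0 i1
  have hti1 : t i1 = i0 := Equiv.swap_apply_right i0 i1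
  have htother : ∀ j, j ≠ i0 → j ≠ i1 → t j = j := fun j h1 h2 =>
    Equiv.swap_apply_of_ne_of_ne h1 h2
  -- basic values
  have hci0 : c i0 = -1 := by simp [hc, hne, hne.symm]
  have hci1 : c i1 = 1 := by simp [hc, hne, hne.symm]
  have hval0 : ((i0 : ℕ) : ℚ) = 0 := by simp [hi0]
  have hval1 : ((i1 : ℕ) : ℚ) = (p : ℚ) := by simp [hi1]
  -- pact t δ = δ + p • c
  have htδ : pact t (weylδ r) = weylδ r + (p : ℚ) • c := by
    funext j
    have : pact t (weylδ r) j = weylδ r (t j) := by rw [pact, htinv]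
    rw [this]
    by_cases h1 : j = i0
    · subst h1
      rw [hti0]
      simp only [Pi.add_apply, Pi.smul_apply, hci0, smul_eq_mul, weylδ, hval0, hval1]
      ring
    by_cases h2 : j = i1
    · subst h2
      rw [hti1]
      simp only [Pi.add_apply, Pi.smul_apply, hci1, smul_eq_mul, weylδ, hval0, hval1]
      ring
    · rw [htother j h1 h2]
      simp only [Pi.add_apply, Pi.smul_apply, smul_eq_mul, hc, if_neg h2, if_neg h1]
      ring
  -- pact t c = -c
  have htc : pact t c = -c := by
    funext j
    have : pact t c j = c (t j) := by rw [pact, htinv]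
    rw [this]
    by_cases h1 : j = i0
    · subst h1; rw [hti0]; simp [hci0, hci1]
    by_cases h2 : j = i1
    · subst h2; rw [hti1]; simp [hci0, hci1]
    · rw [htother j h1 h2]
      simp [hc, if_neg h1, if_neg h2]
  -- ip c v = v i1 - v i0
  have hipc : ∀ v : Fin r → ℚ, ip c v = v i1 - v i0 := by
    intro v
    simp [ip, hc, sub_mul, Finset.sum_sub_distrib, ite_mul, Finset.sum_ite_eq']
  have hcδ : ip c (weylδ r) = -(p : ℚ) := by
    rw [hipc]
    simp only [weylδ, hval0, hval1]
    ring
  have hcc : ip c c = 2 := by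
    rw [hipc, hci0, hci1]; norm_num
  have hcsum : ∑ j, c j = 0 := by
    simp [hc, Finset.sum_sub_distrib, Finset.sum_ite_eq']
  -- self-adjointness of pact t
  have ipt : ∀ u v : Fin r → ℚ, ip (pact t u) v = ip u (pact t v) := by
    intro u v; rw [ip_pact_left, htinv]
  have hpactt : ∀ v : Fin r → ℚ, pact t (pact t v) = v := by
    intro v; rw [← pact_mul, hss, pact_one]
  -- key energy identity
  have hE : ∀ (α : Fin r → ℚ) (w : Equiv.Perm (Fin r)),
      Eexp r p p' (pact t α - c) (t * w) = Eexp r p p' α w := by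
    intro α w
    have e0 : pact (t * w) (weylδ r) = pact t (pact w (weylδ r)) := pact_mul t w _
    set D := weylδ r with hD
    set W := pact w D with hW
    have hαc : ip (pact t α) c = - ip α c := by
      rw [ipt, htc, ip_neg_right]
    have hcW : ip c (pact t W) = - ip c W := by
      rw [ip_comm, ipt, htc, ip_neg_right, ip_comm W c]
    have h1 : ip (pact t α - c) (pact t α - c) = ip α α + 2 * ip α c + 2 := by
      rw [ip_sub_left, ip_sub_right, ip_sub_right, ip_pact_pact, hαc,
        ip_comm c (pact t α), hαc, hcc]
      ring
    have h2 : ip (pact t α - c) D = ip α D + (p : ℚ) * ip α c + p := by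
      rw [ip_sub_left, ipt, htδ, ip_add_right, ip_smul_right, hcδ]
      ring
    have h3 : ip (pact t α - c) (pact t W) = ip α W + ip c W := by
      rw [ip_sub_left, ip_pact_pact, hcW]; ring
    have h4 : ip D (pact t W - D) = ip D W + (p : ℚ) * ip c W - ip D D := by
      rw [ip_sub_right, ← ipt, htδ, ip_add_left, ip_smul_left]
    unfold Eexp
    rw [e0, ← hD, ← hW, h1, h2, h3, h4, ip_sub_right]
    ring
  -- membership preservation
  have hmem : ∀ α : Fin r → ℚ, (∃ β, memQ β ∧ α = μ + β) →
      (∃ β, memQ β ∧ pact t α - c = μ + β) := by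
    rintro α ⟨β, ⟨hβV, hβZ⟩, rfl⟩
    refine ⟨pact t (μ + β) - c - μ, ⟨?_, ?_⟩, by ring⟩
    · unfold memV
      simp only [Pi.sub_apply, Finset.sum_sub_distrib]
      rw [sum_pact, hcsum]
      have h1 : ∑ i, (μ + β) i = 0 := by
        simp only [Pi.add_apply, Finset.sum_add_distrib]
        rw [hμ.1, hβV]; ring
      rw [h1, hμ.1]; ring
    · intro j
      have hpj : ∀ v : Fin r → ℚ, pact t v j = v (t j) := by
        intro v; rw [pact, htinv]
      by_cases h1 : j = i0
      · subst h1
        obtain ⟨m1, hm1⟩ := hμ.2 i1 i0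
        obtain ⟨m2, hm2⟩ := hβZ i1
        refine ⟨m1 + m2 + 1, ?_⟩
        simp only [Pi.sub_apply, hpj, hti0, Pi.add_apply, hci0]
        push_cast
        linarith
      by_cases h2 : j = i1
      · subst h2
        obtain ⟨m1, hm1⟩ := hμ.2 i0 i1
        obtain ⟨m2, hm2⟩ := hβZ i0
        refine ⟨m1 + m2 - 1, ?_⟩
        simp only [Pi.sub_apply, hpj, hti1, Pi.add_apply, hci1]
        push_cast
        linarith
      · obtain ⟨m2, hm2⟩ := hβZ j
        refine ⟨m2, ?_⟩
        simp only [Pi.sub_apply, hpj, htother j h1 h2, Pi.add_apply, hc,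
          if_neg h1, if_neg h2]
        linarith
  -- sign of t
  have hsgnt : Equiv.Perm.sign t = -1 := Equiv.Perm.sign_swap hne
  have hsgn : ∀ w : Equiv.Perm (Fin r), Equiv.Perm.sign (t * w) = - Equiv.Perm.sign w := by
    intro w; rw [Equiv.Perm.sign_mul, hsgnt, neg_one_mul]
  -- inverse formula
  have hinv : ∀ α : Fin r → ℚ, pact t (pact t α - c) - c = α := by
    intro α
    rw [pact_sub, hpactt, htc]
    funext j; simp
  have hww : ∀ w : Equiv.Perm (Fin r), t * (t * w) = w := by
    intro w; rw [← mul_assoc, hss, one_mul]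
  refine ⟨{
    toFun := fun a => ⟨(pact t a.1.1 - c, t * a.1.2),
      hmem a.1.1 a.2.1, (hE a.1.1 a.1.2).trans a.2.2.1, by rw [hsgn, a.2.2.2]⟩
    invFun := fun a => ⟨(pact t a.1.1 - c, t * a.1.2),
      hmem a.1.1 a.2.1, (hE a.1.1 a.1.2).trans a.2.2.1, by rw [hsgn, a.2.2.2, neg_neg]⟩
    left_inv := fun a => Subtype.ext (Prod.ext (hinv a.1.1) (hww a.1.2))
    right_inv := fun a => Subtype.ext (Prod.ext (hinv a.1.1) (hww a.1.2)) }⟩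
end
end

section
/- Let r ≥ 2 and let p be an integer with p ≥ r. Then for u, w ∈ S_r one has u•δ − w•δ ∈ pQ_r if and only if u = w. -/
open Finset

noncomputable section

/-!
The `i`-th coordinate of `u • δ - w • δ` is `w⁻¹ i - u⁻¹ i`, a difference of two indices in
`[0, r)`. Being a multiple of `p ≥ r`, it must vanish, so `u⁻¹ = w⁻¹`.
-/

lemma Fin.eq_of_dvd_sub {r p : ℕ} (hp : r ≤ p) {i j : Fin r} (h : (p : ℤ) ∣ (i : ℤ) - j) :
    i = j := by
  have hlt : |(i : ℤ) - j| < p := by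
    rw [abs_sub_lt_iff]
    omega
  have := Int.eq_zero_of_abs_lt_dvd h hlt
  omega

lemma weylδ_sub_weylδ (r : ℕ) (i j : Fin r) :
    weylδ r i - weylδ r j = ((j : ℕ) : ℚ) - (i : ℕ) := by
  simp only [weylδ]
  ring

lemma pact_weylδ_sub_pact_weylδ_apply {r : ℕ} (u w : Equiv.Perm (Fin r)) (i : Fin r) :
    (pact u (weylδ r) - pact w (weylδ r)) i = ((w⁻¹ i : ℕ) : ℚ) - (u⁻¹ i : ℕ) :=
  weylδ_sub_weylδ r (u⁻¹ i) (w⁻¹ i)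

lemma memQ_zero (r : ℕ) : memQ (0 : Fin r → ℚ) :=
  ⟨by simp [memV], fun _ => ⟨0, by simp⟩⟩

theorem stmt10_general (r p : ℕ) (hp : r ≤ p) (u w : Equiv.Perm (Fin r)) :
    (∃ β, memQ β ∧ pact u (weylδ r) - pact w (weylδ r) = (p : ℚ) • β) ↔ u = w := by
  constructor
  · rintro ⟨β, ⟨-, hβ⟩, heq⟩
    suffices w⁻¹ = u⁻¹ from (inv_inj.mp this).symm
    ext i : 1
    obtain ⟨m, hm⟩ := hβ i
    have hcoord := congrFun heq i
    rw [pact_weylδ_sub_pact_weylδ_apply, Pi.smul_apply, hm, smul_eq_mul] at hcoord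
    exact Fin.eq_of_dvd_sub hp ⟨m, by exact_mod_cast hcoord⟩
  · rintro rfl
    exact ⟨0, memQ_zero r, by simp⟩

/-- for `p ≥ r`, `u•δ - w•δ ∈ pQ_r` iff `u = w`. -/
theorem stmt10 (r p : ℕ) (hr : 2 ≤ r) (hp : r ≤ p) (u w : Equiv.Perm (Fin r)) :
    (∃ β, memQ β ∧ pact u (weylδ r) - pact w (weylδ r) = (p : ℚ) • β) ↔ u = w :=
  stmt10_general r p hp u w
end
end

section
/- Let r ≥ 2, let p < p' be coprime positive integers, and let 0 ≤ j ≤ r − 1. Define E(λ,w) = (pp'/2)‖λ‖² − p'⟨λ,δ⟩ + p⟨λ, w•δ⟩ − ⟨δ, w•δ − δ⟩ for λ ∈ V, w ∈ S_r. Then for every x ∈ ℚ the set L_x = {(λ,w) : λ ∈ jΛ_1 + Q_r, w ∈ S_r, E(λ,w) = x} is finite, and there exists N ∈ ℕ such that for all n ≥ N, {(λ,w) : λ ∈ Π_{r,j+nr}, w ∈ S_r, E(λ,w) = x} = L_x. (This is the coefficient-wise form of the statement that the shifted invariants J_{T(p,p')}(L_r((j+nr)Λ_1)) converge, as n → ∞,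 to the series whose exponent-x signed count is given by L_x.) -/
open Finset

noncomputable section

/-!
For fixed `w`, `E(·, w)` is a quadratic function with positive leading coefficient `pp'/2`, so
its level sets are bounded; a bounded part of the discrete coset `jΛ₁ + Q_r` is finite, and
`S_r` is finite. Conversely `Π_{r,j+nr} ⊆ jΛ₁ + Q_r` because `rΛ₁ ∈ Q_r`, while a fixed
`λ = jΛ₁ + β` lies in `Π_{r,j+nr}` as soon as `n` dominates the partial sums of `β`: the
simple-root coordinates of `(j+nr)Λ₁ - λ` are `n(r-1-k) - (β₁ + ⋯ + β_{k+1})`. The largest of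
these thresholds over the finite set `L_x` is the required `N`.
-/

open Filter

section

variable {r : ℕ}

lemma abs_le_of_quadratic_le {ι : Type*} [Fintype ι] {c y : ℚ} (hc : 0 < c) {u v : ι → ℚ}
    (h : c * ∑ k, v k ^ 2 + ∑ k, u k * v k ≤ y) (i : ι) :
    |v i| ≤ 1 + (2 * c * y + ∑ k, u k ^ 2) / c ^ 2 := by
  have hsq : c ^ 2 * v i ^ 2 ≤ 2 * c * y + ∑ k, u k ^ 2 :=
    calc c ^ 2 * v i ^ 2 ≤ c ^ 2 * ∑ k, v k ^ 2 :=
          mul_le_mul_of_nonneg_left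
            (single_le_sum (fun k _ => sq_nonneg (v k)) (mem_univ i)) (sq_nonneg c)
      _ ≤ c ^ 2 * ∑ k, v k ^ 2 + ∑ k, (c * v k + u k) ^ 2 :=
          le_add_of_nonneg_right (sum_nonneg fun k _ => sq_nonneg _)
      _ = 2 * c * (c * ∑ k, v k ^ 2 + ∑ k, u k * v k) + ∑ k, u k ^ 2 := by
          simp only [mul_sum, ← sum_add_distrib]
          exact sum_congr rfl fun k _ => by ring
      _ ≤ 2 * c * y + ∑ k, u k ^ 2 := by gcongr
  have hvi : v i ^ 2 ≤ (2 * c * y + ∑ k, u k ^ 2) / c ^ 2 := by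
    rw [le_div_iff₀ (by positivity)]
    linarith
  nlinarith [abs_nonneg (v i), sq_abs (v i), sq_nonneg (|v i| - 1)]

lemma Eexp_eq_quadratic (p p' : ℕ) (v : Fin r → ℚ) (w : Equiv.Perm (Fin r)) :
    Eexp r p p' v w = (p * p' / 2 : ℚ) * ∑ k, v k ^ 2
      + ∑ k, (p * pact w (weylδ r) k - p' * weylδ r k) * v k
      - ip (weylδ r) (pact w (weylδ r) - weylδ r) := by
  simp only [Eexp, ip, mul_sum, ← sum_add_distrib, ← sum_sub_distrib]
  exact sum_congr rfl fun k _ => by ring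

lemma finite_of_sub_int_of_abs_le {ι : Type*} [Fintype ι] [DecidableEq ι] (a : ι → ℚ) (B : ℚ) :
    {v : ι → ℚ | (∀ i, ∃ m : ℤ, v i - a i = m) ∧ ∀ i, |v i| ≤ B}.Finite := by
  let K : ι → ℤ := fun i => ⌈B + |a i|⌉
  refine ((Set.finite_Icc (-K) K).image fun b i => a i + b i).subset ?_
  rintro v ⟨hint, hB⟩
  choose b hb using hint
  have hbK : ∀ i, |b i| ≤ K i := fun i => by
    have : |(b i : ℚ)| ≤ B + |a i| := by
      rw [← hb]
      exact (abs_sub _ _).trans (add_le_add (hB i) le_rfl)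
    exact_mod_cast this.trans (Int.le_ceil _)
  exact ⟨b, ⟨fun i => (abs_le.1 (hbK i)).1, fun i => (abs_le.1 (hbK i)).2⟩,
    funext fun i => by simp [← hb]⟩

lemma finite_Eexp_level {p p' : ℕ} (hp : 0 < p) (hp' : 0 < p') (a : Fin r → ℚ) (x : ℚ) :
    {lw : (Fin r → ℚ) × Equiv.Perm (Fin r) |
      (∃ β, memQ β ∧ lw.1 = a + β) ∧ Eexp r p p' lw.1 lw.2 = x}.Finite := by
  have hc : (0 : ℚ) < p * p' / 2 := by positivity
  have hfiber : ∀ w : Equiv.Perm (Fin r),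
      {v : Fin r → ℚ | (∃ β, memQ β ∧ v = a + β) ∧ Eexp r p p' v w = x}.Finite := by
    intro w
    refine (finite_of_sub_int_of_abs_le a (1 + (2 * (p * p' / 2) *
      (x + ip (weylδ r) (pact w (weylδ r) - weylδ r)) + ∑ k,
        (p * pact w (weylδ r) k - p' * weylδ r k) ^ 2) / (p * p' / 2) ^ 2)).subset ?_
    rintro v ⟨⟨β, hβ, rfl⟩, hE⟩
    refine ⟨fun i => by simpa using hβ.2 i, abs_le_of_quadratic_le hc ?_⟩
    rw [Eexp_eq_quadratic] at hE
    linarith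
  refine ((Set.finite_iUnion hfiber).prod (Set.finite_univ (α := Equiv.Perm (Fin r)))).subset ?_
  rintro ⟨v, w⟩ h
  exact ⟨Set.mem_iUnion.2 ⟨w, h⟩, trivial⟩

def rootLattice (r : ℕ) : AddSubgroup (Fin r → ℚ) where
  carrier := {v | memQ v}
  add_mem' := by
    rintro u v ⟨hu, hu'⟩ ⟨hv, hv'⟩
    refine ⟨?_, fun i => ?_⟩
    · simp only [memV] at hu hv ⊢
      simp [sum_add_distrib, hu, hv]
    obtain ⟨m, hm⟩ := hu' i
    obtain ⟨n, hn⟩ := hv' i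
    exact ⟨m + n, by simp [hm, hn]⟩
  zero_mem' := ⟨by simp [memV], fun _ => ⟨0, by simp⟩⟩
  neg_mem' := by
    rintro v ⟨hv, hv'⟩
    refine ⟨by simpa [memV] using hv, fun i => ?_⟩
    obtain ⟨m, hm⟩ := hv' i
    exact ⟨-m, by simp [hm]⟩

lemma sum_ite_val_eq_one {t : ℕ} (ht : t < r) :
    ∑ i : Fin r, (if (i : ℕ) = t then (1 : ℚ) else 0) = 1 := by
  rw [Fin.sum_univ_eq_sum_range (fun i => if i = t then (1 : ℚ) else 0), sum_ite_eq']
  simp [ht]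

lemma srootF_mem_rootLattice (k : Fin (r - 1)) : srootF k ∈ rootLattice r := by
  refine ⟨?_, fun i => ⟨(if (i : ℕ) = k then 1 else 0) - (if (i : ℕ) = k + 1 then 1 else 0), ?_⟩⟩
  · simp only [memV, srootF, sum_sub_distrib]
    rw [sum_ite_val_eq_one (by omega), sum_ite_val_eq_one (by omega), sub_self]
  · simp only [srootF]
    split_ifs <;> simp

lemma natCast_smul_Lam1_mem_rootLattice (hr : r ≠ 0) :
    (r : ℚ) • Lam1 r ∈ rootLattice r := by
  have hrQ : (r : ℚ) ≠ 0 := by exact_mod_cast hr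
  refine ⟨?_, fun i => ⟨(if (i : ℕ) = 0 then r else 0) - 1, ?_⟩⟩
  · simp only [memV, Lam1, Pi.smul_apply, smul_eq_mul, ← mul_sum, sum_sub_distrib,
      sum_ite_val_eq_one (Nat.pos_of_ne_zero hr)]
    simp [hrQ]
  · simp only [Lam1, Pi.smul_apply, smul_eq_mul]
    split_ifs <;> field_simp <;> simp

lemma exists_memQ_of_mem_PiWts {j n : ℕ} (hr : r ≠ 0) {v : Fin r → ℚ}
    (hv : v ∈ PiWts r (j + n * r)) : ∃ β, memQ β ∧ v = (j : ℚ) • Lam1 r + β := by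
  obtain ⟨a, -, -, -, rfl⟩ := hv
  refine ⟨n • ((r : ℚ) • Lam1 r) - ∑ k, a k • srootF k, ?_, ?_⟩
  · exact sub_mem (nsmul_mem (natCast_smul_Lam1_mem_rootLattice hr) n)
      (sum_mem fun k _ => zsmul_mem (srootF_mem_rootLattice k) (a k))
  · simp only [← Int.cast_smul_eq_zsmul ℚ]
    push_cast
    module

def partialSum (v : Fin r → ℚ) (m : ℕ) : ℚ :=
  ∑ l ∈ univ.filter (fun l : Fin r => (l : ℕ) < m), v l

lemma partialSum_zero (v : Fin r → ℚ) : partialSum v 0 = 0 := by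
  simp [partialSum]

lemma partialSum_of_le {m : ℕ} (v : Fin r → ℚ) (hm : r ≤ m) : partialSum v m = ∑ l, v l := by
  rw [partialSum, filter_true_of_mem fun l _ => by omega]

lemma partialSum_succ (v : Fin r → ℚ) (i : Fin r) :
    partialSum v (i + 1) = partialSum v i + v i := by
  have hfilter : univ.filter (fun l : Fin r => (l : ℕ) < i + 1)
      = insert i (univ.filter fun l : Fin r => (l : ℕ) < i) := by
    ext l
    simp only [mem_filter, mem_univ, true_and, mem_insert, Fin.ext_iff]
    omega
  rw [partialSum, partialSum, hfilter, sum_insert (by simp), add_comm]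

lemma sum_smul_srootF_apply (c : ℕ → ℚ) (hc0 : c 0 = 0) (hcr : c r = 0) (i : Fin r) :
    (∑ k : Fin (r - 1), c (k + 1) • srootF k) i = c (i + 1) - c i := by
  have hi := i.isLt
  simp only [Finset.sum_apply, Pi.smul_apply, smul_eq_mul, srootF, mul_sub, mul_ite, mul_one, mul_zero,
    sum_sub_distrib]
  rw [Fin.sum_univ_eq_sum_range (fun k => if (i : ℕ) = k then c (k + 1) else 0),
    Fin.sum_univ_eq_sum_range (fun k => if (i : ℕ) = k + 1 then c (k + 1) else 0)]
  have hfirst : ∑ k ∈ range (r - 1), (if (i : ℕ) = k then c (k + 1) else 0) = c (i + 1) := by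
    rw [sum_ite_eq]
    split_ifs with h
    · rfl
    · rw [mem_range] at h
      rw [show (i : ℕ) + 1 = r by omega, hcr]
  have hsecond : ∑ k ∈ range (r - 1), (if (i : ℕ) = k + 1 then c (k + 1) else 0) = c i := by
    have := sum_range_succ' (fun m => if (i : ℕ) = m then c m else 0) (r - 1)
    rw [Nat.sub_add_cancel (by omega), sum_ite_eq, if_pos (mem_range.2 hi)] at this
    simpa [hc0] using this.symm
  rw [hfirst, hsecond]

lemma eq_sum_partialSum_smul_srootF {v : Fin r → ℚ} (hv : memV v) :
    v = ∑ k : Fin (r - 1), partialSum v (k + 1) • srootF k := by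
  funext i
  rw [sum_smul_srootF_apply _ (partialSum_zero v) ((partialSum_of_le v le_rfl).trans hv),
    partialSum_succ]
  ring

lemma partialSum_Lam1 {m : ℕ} (hm : m ≤ r) (hm0 : 0 < m) :
    partialSum (Lam1 r) m = 1 - m / r := by
  have hzero : ∑ l ∈ univ.filter (fun l : Fin r => (l : ℕ) < m),
      (if (l : ℕ) = 0 then (1 : ℚ) else 0) = 1 := by
    rw [sum_filter]
    refine (sum_congr rfl fun l _ => ?_).trans (sum_ite_val_eq_one (t := 0) (by omega))
    split_ifs <;> first | rfl | omega
  simp only [partialSum, Lam1, sum_sub_distrib, sum_const, Fin.card_filter_val_lt, hzero,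
    min_eq_right hm, nsmul_eq_mul]
  ring

lemma eventually_mem_PiWts (hr : r ≠ 0) (j : ℕ) {β : Fin r → ℚ} (hβ : memQ β) :
    ∀ᶠ n in atTop, (j : ℚ) • Lam1 r + β ∈ PiWts r (j + n * r) := by
  choose b hb using hβ.2
  let S : ℕ → ℤ := fun m => ∑ l ∈ univ.filter (fun l : Fin r => (l : ℕ) < m), b l
  let M : ℤ := ∑ l, |b l|
  have hS : ∀ m, |S m| ≤ M := fun m => (abs_sum_le_sum_abs _ _).trans
    (sum_le_sum_of_subset_of_nonneg (filter_subset _ _) fun _ _ _ => abs_nonneg _)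
  have hM : 0 ≤ M := (abs_nonneg _).trans (hS 0)
  -- `n ≥ 2M` dominates each partial sum of `b` and each difference of two of them.
  filter_upwards [eventually_ge_atTop (2 * M).toNat] with n hn
  have hnM : 2 * M ≤ n := by omega
  let a : Fin (r - 1) → ℤ := fun k => n * (r - 1 - k) - S (k + 1)
  let w : Fin r → ℚ := n • ((r : ℚ) • Lam1 r) - β
  have hw : w ∈ rootLattice r := sub_mem (nsmul_mem (natCast_smul_Lam1_mem_rootLattice hr) n) hβ
  have ha : ∀ k : Fin (r - 1), partialSum w (k + 1) = a k := by
    intro k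
    have hLam := partialSum_Lam1 (r := r) (m := k + 1) (by omega) (by omega)
    have hwl : ∀ l, w l = (n * r : ℚ) * Lam1 r l - b l := fun l => by
      simp [w, hb]
      ring
    rw [partialSum, sum_congr rfl fun l _ => hwl l, sum_sub_distrib, ← mul_sum, ← partialSum, hLam]
    push_cast [a, S]
    field_simp
    ring
  have hsum : ∑ k, (a k : ℚ) • srootF k = w := by
    simp_rw [← ha]
    exact (eq_sum_partialSum_smul_srootF hw.1).symm
  refine ⟨a, fun k => ?_, fun k => ?_, fun k k' hkk' => ?_, ?_⟩
  · have hk : (k : ℤ) + 2 ≤ r := by omega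
    have := abs_le.1 (hS (k + 1))
    have : (n : ℤ) ≤ n * (r - 1 - k) := le_mul_of_one_le_right (by positivity) (by omega)
    linarith
  · have hk : (k : ℤ) + 2 ≤ r := by omega
    have := abs_le.1 (hS (k + 1))
    have : (n : ℤ) * (r - 1 - k) + n ≤ n * r := by nlinarith
    push_cast
    linarith
  · rcases eq_or_lt_of_le hkk' with rfl | hlt
    · rfl
    · have hk : (k : ℤ) + 1 ≤ k' := by have := Fin.lt_def.1 hlt; omega
      have := abs_le.1 (hS (k + 1))
      have := abs_le.1 (hS (k' + 1))
      have : (n : ℤ) * (r - 1 - k') + n ≤ n * (r - 1 - k) := by nlinarith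
      linarith
  · rw [hsum]
    push_cast
    module

end

theorem stmt12_general (r p p' : ℕ) (hr : 2 ≤ r) (hp : 1 ≤ p) (hpp' : p < p')
    (j : ℕ) (x : ℚ) :
    ({lw : (Fin r → ℚ) × Equiv.Perm (Fin r) |
        (∃ β, memQ β ∧ lw.1 = (j : ℚ) • Lam1 r + β) ∧ Eexp r p p' lw.1 lw.2 = x}.Finite) ∧
    (∃ N : ℕ, ∀ n : ℕ, N ≤ n →
      {lw : (Fin r → ℚ) × Equiv.Perm (Fin r) |
          lw.1 ∈ PiWts r (j + n * r) ∧ Eexp r p p' lw.1 lw.2 = x}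
        = {lw : (Fin r → ℚ) × Equiv.Perm (Fin r) |
            (∃ β, memQ β ∧ lw.1 = (j : ℚ) • Lam1 r + β) ∧ Eexp r p p' lw.1 lw.2 = x}) := by
  have hr0 : r ≠ 0 := by omega
  have hfin := finite_Eexp_level (p := p) (p' := p') (by omega) (by omega) ((j : ℚ) • Lam1 r) x
  refine ⟨hfin, eventually_atTop.1 ?_⟩
  have hall := (eventually_all_finite hfin).2 fun lw ⟨⟨β, hβ, hlw⟩, _⟩ =>
    hlw ▸ eventually_mem_PiWts hr0 j hβ
  filter_upwards [hall] with n hn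
  ext lw
  exact ⟨fun ⟨hv, hE⟩ => ⟨exists_memQ_of_mem_PiWts hr0 hv, hE⟩, fun h => ⟨hn lw h, h.2⟩⟩

/-- for each `x ∈ ℚ`, the set
`L_x = {(λ,w) : λ ∈ jΛ₁ + Q_r, w ∈ S_r, E(λ,w) = x}` is finite, and for all large
enough `n` it coincides with `{(λ,w) : λ ∈ Π_{r,j+nr}, w ∈ S_r, E(λ,w) = x}`
(coefficient-wise convergence of the shifted invariants). -/
theorem stmt12 (r p p' : ℕ) (hr : 2 ≤ r) (hp : 1 ≤ p) (hpp' : p < p')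
    (hcop : Nat.Coprime p p') (j : ℕ) (hj : j ≤ r - 1) (x : ℚ) :
    ({lw : (Fin r → ℚ) × Equiv.Perm (Fin r) |
        (∃ β, memQ β ∧ lw.1 = (j : ℚ) • Lam1 r + β) ∧ Eexp r p p' lw.1 lw.2 = x}.Finite) ∧
    (∃ N : ℕ, ∀ n : ℕ, N ≤ n →
      {lw : (Fin r → ℚ) × Equiv.Perm (Fin r) |
          lw.1 ∈ PiWts r (j + n * r) ∧ Eexp r p p' lw.1 lw.2 = x}
        = {lw : (Fin r → ℚ) × Equiv.Perm (Fin r) |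
            (∃ β, memQ β ∧ lw.1 = (j : ℚ) • Lam1 r + β) ∧ Eexp r p p' lw.1 lw.2 = x}) :=
  stmt12_general r p p' hr hp hpp' j x
end
end

section
/- Let p' ≥ 3 be odd. For n ∈ ℕ let P_n(q) = Σ_{i=0}^{n} (−1)^i · q^{(p'/2)(i²+i) − i} · (1 − q^{n−i+1})(1 − q^{2i+1})(1 − q^{n+i+2}), a polynomial in ℤ[q] (all exponents (p'/2)(i²+i) − i are nonnegative integers since i²+i is even). Then for every m ∈ ℕ there exists N ∈ ℕ such that for all n ≥ N, the coefficient of q^m in P_n(q) equals the coefficient of q^m in the power series Σ_{i=0}^{∞} (−1)^i · q^{(p'/2)(i²+i) − i} · (1 − q^{2i+1}) ∈ ℤ[[q]] (this series is well defined since only finitely many terms contribute to each fixed power of q). That is, the sequence P_n(q) converges coefficient-wise to Σ_{i≥0} (−1)^i q^{(p'/2)(i²+i)−i}(1 − q^{2i+1}). -/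
open Finset

noncomputable section

/-- The polynomial
`P_n(q) = Σ_{i=0}^{n} (-1)^i q^{(p'/2)(i²+i) - i} (1-q^{n-i+1})(1-q^{2i+1})(1-q^{n+i+2})`;
the exponents `(p'/2)(i²+i) - i = p'(i²+i)/2 - i` are nonnegative integers since
`i²+i` is even (and `p' ≥ 3`). -/
def P (p' n : ℕ) : Polynomial ℤ :=
  ∑ i ∈ Finset.range (n + 1), ((-1 : ℤ) ^ i) •
    (Polynomial.X ^ (p' * (i ^ 2 + i) / 2 - i) *
      (1 - Polynomial.X ^ (n - i + 1)) * (1 - Polynomial.X ^ (2 * i + 1)) *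
      (1 - Polynomial.X ^ (n + i + 2)) : Polynomial ℤ)

/-- The power series `Σ_{i=0}^{∞} (-1)^i q^{(p'/2)(i²+i) - i} (1-q^{2i+1}) ∈ ℤ[[q]]`:
since the exponent `p'(i²+i)/2 - i` is at least `i`, only the terms with `i ≤ m`
can contribute to the coefficient of `q^m`, so the series is well defined, with
`m`-th coefficient `Σ_{i=0}^{m} (-1)^i ([p'(i²+i)/2 - i = m] - [p'(i²+i)/2 + i + 1 = m])`. -/
def S (p' : ℕ) : PowerSeries ℤ :=
  PowerSeries.mk (fun m => ∑ i ∈ Finset.range (m + 1), (-1 : ℤ) ^ i *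
    ((if p' * (i ^ 2 + i) / 2 - i = m then 1 else 0)
      - (if p' * (i ^ 2 + i) / 2 + i + 1 = m then 1 else 0)))

open Polynomial

/-! Since `p' ≥ 2`, the `i`-th exponent `e_i = p'(i²+i)/2 - i` is at least `i`. For `i ≤ n`,
the factors `1 - q^{n-i+1}` and `1 - q^{n+i+2}` then only touch degrees `> n`, so for `n ≥ m`
the coefficient of `q^m` in `P_n` is that of `Σ_{i ≤ n} (-1)^i q^{e_i}(1 - q^{2i+1})`; the terms
with `m < i ≤ n` start in degree `e_i > m` and drop out, leaving the `m`-th coefficient of the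
limit series. -/

lemma two_mul_le_mul_sq_add_self_div_two {p' : ℕ} (hp : 2 ≤ p') (i : ℕ) :
    2 * i ≤ p' * (i ^ 2 + i) / 2 :=
  calc 2 * i ≤ i ^ 2 + i := by nlinarith
    _ = 2 * (i ^ 2 + i) / 2 := by omega
    _ ≤ p' * (i ^ 2 + i) / 2 := Nat.div_le_div_right (Nat.mul_le_mul_right _ hp)

lemma coeff_X_pow_mul_prod_one_sub_X_pow_of_lt
    {R : Type*} [CommRing R] {e a b c m : ℕ} (ha : m < e + a) (hc : m < e + c) :
    (X ^ e * (1 - X ^ a) * (1 - X ^ b) * (1 - X ^ c) : R[X]).coeff m =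
      (if e = m then 1 else 0) - (if e + b = m then 1 else 0) := by
  have hsplit : (X ^ e * (1 - X ^ a) * (1 - X ^ b) * (1 - X ^ c) : R[X]) =
      X ^ e - X ^ (e + b) - X ^ (e + a) * ((1 - X ^ b) * (1 - X ^ c))
        - X ^ (e + c) * (1 - X ^ b) := by
    simp only [pow_add]; ring
  rw [hsplit]
  simp only [coeff_sub, coeff_X_pow, coeff_X_pow_mul', not_le.mpr ha, not_le.mpr hc,
    if_false, sub_zero, eq_comm]

section

variable {p' : ℕ}

lemma coeff_summand_P (hp : 2 ≤ p') {n m i : ℕ} (hm : m ≤ n) (hi : i ≤ n) :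
    (((-1 : ℤ) ^ i) • (X ^ (p' * (i ^ 2 + i) / 2 - i) * (1 - X ^ (n - i + 1)) *
      (1 - X ^ (2 * i + 1)) * (1 - X ^ (n + i + 2)) : ℤ[X])).coeff m =
      (-1 : ℤ) ^ i * ((if p' * (i ^ 2 + i) / 2 - i = m then 1 else 0)
        - (if p' * (i ^ 2 + i) / 2 + i + 1 = m then 1 else 0)) := by
  have hexp := two_mul_le_mul_sq_add_self_div_two hp i
  rw [coeff_smul, smul_eq_mul,
    coeff_X_pow_mul_prod_one_sub_X_pow_of_lt (by omega) (by omega)]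
  have hshift : p' * (i ^ 2 + i) / 2 - i + (2 * i + 1) = p' * (i ^ 2 + i) / 2 + i + 1 := by
    omega
  rw [hshift]

lemma summand_S_eq_zero_of_lt (hp : 2 ≤ p') {m i : ℕ} (hi : m < i) :
    (-1 : ℤ) ^ i * ((if p' * (i ^ 2 + i) / 2 - i = m then 1 else 0)
      - (if p' * (i ^ 2 + i) / 2 + i + 1 = m then 1 else 0)) = 0 := by
  have hexp := two_mul_le_mul_sq_add_self_div_two hp i
  rw [if_neg (by omega), if_neg (by omega), sub_zero, mul_zero]

end

theorem stmt19_general (p' : ℕ) (hp' : 3 ≤ p') :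
    ∀ m : ℕ, ∃ N : ℕ, ∀ n : ℕ, N ≤ n →
      (P p' n).coeff m = PowerSeries.coeff m (S p') := by
  have hp : 2 ≤ p' := by omega
  intro m
  refine ⟨m, fun n hn => ?_⟩
  rw [P, finsetSum_coeff, S, PowerSeries.coeff_mk,
    sum_congr rfl fun i hi => coeff_summand_P hp hn (Nat.lt_succ_iff.mp (mem_range.mp hi))]
  refine (sum_subset (range_subset_range.mpr (by omega)) fun i _ hi => ?_).symm
  exact summand_S_eq_zero_of_lt hp (by simpa using hi)

/-- for odd `p' ≥ 3`, the polynomials `P_n(q)` converge coefficient-wise,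
as `n → ∞`, to the power series `Σ_{i≥0} (-1)^i q^{(p'/2)(i²+i)-i}(1 - q^{2i+1})`. -/
theorem stmt19 (p' : ℕ) (hp' : 3 ≤ p') (hodd : Odd p') :
    ∀ m : ℕ, ∃ N : ℕ, ∀ n : ℕ, N ≤ n →
      (P p' n).coeff m = PowerSeries.coeff m (S p') :=
  stmt19_general p' hp'
end
end
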